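/- arXiv:math/0503613 — 4 statements merged into one kernel-verified Lean document; each statement's English description precedes it below -/
import Mathlib

section
/- Let L be a finite lattice and C ⊆ L \ {⊥,⊤} a crosscut. Define φ: L → L by φ(x) = ⋁{c ∈ C | c ≤ x} if x is above some element of C, and φ(x) = ⋀{c ∈ C | c ≥ x} if x is below some element of C (these cases exhaust L since C is saturated, and agree on C). Then φ is order-preserving. -/
open scoped Classical

/-- The map associated to a crosscut `C`: `φ(x) = ⋁{c ∈ C | c ≤ x}` if `x` lies above
some element of `C`, and `φ(x) = ⋀{c ∈ C | x ≤ c}` otherwise. -/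
noncomputable def crosscutMap {L : Type*} [Lattice L] [BoundedOrder L]
    (C : Finset L) (x : L) : L :=
  if ∃ c ∈ C, c ≤ x then (C.filter (fun c => c ≤ x)).sup id
  else (C.filter (fun c => x ≤ c)).inf id

/-- The map `φ` associated to a crosscut of a finite lattice is order-preserving. -/
theorem crosscutMap_monotone {L : Type*} [Lattice L] [BoundedOrder L] [Fintype L]
    (C : Finset L)
    (hproper : ∀ c ∈ C, c ≠ ⊥ ∧ c ≠ ⊤)
    (hanti : IsAntichain (· ≤ ·) (↑C : Set L))
    (hsat : ∀ γ : Set L, IsChain (· ≤ ·) γ →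
      ∃ x ∈ C, IsChain (· ≤ ·) (insert x γ)) :
    Monotone (crosscutMap C) := by
  intro x y hxy
  unfold crosscutMap
  by_cases hx : ∃ c ∈ C, c ≤ x
  · have hy : ∃ c ∈ C, c ≤ y := by
      obtain ⟨c, hc, hcx⟩ := hx
      exact ⟨c, hc, hcx.trans hxy⟩
    rw [if_pos hx, if_pos hy]
    exact Finset.sup_mono (Finset.monotone_filter_right _ (fun c _ hc => le_trans hc hxy))
  · rw [if_neg hx]
    by_cases hy : ∃ c ∈ C, c ≤ y
    · rw [if_pos hy]
      -- use saturation on the chain {x, y}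
      have hchain : IsChain (· ≤ ·) ({x, y} : Set L) := by
        intro a ha b hb hab
        rcases ha with rfl | ha <;> rcases hb with rfl | hb
        · exact absurd rfl hab
        · cases hb; exact Or.inl hxy
        · cases ha; exact Or.inr hxy
        · cases ha; cases hb; exact absurd rfl hab
      obtain ⟨c, hcC, hc⟩ := hsat _ hchain
      have hcx : x ≤ c := by
        rcases eq_or_ne c x with rfl | hne
        · exact le_refl _
        · have := hc (Set.mem_insert _ _) (Set.mem_insert_of_mem _ (Or.inl rfl)) hne
          rcases this with h | h
          · exact absurd ⟨c, hcC, h⟩ hx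
          · exact h
      have hcy : c ≤ y := by
        rcases eq_or_ne c y with rfl | hne
        · exact le_refl _
        · have := hc (Set.mem_insert _ _)
            (Set.mem_insert_of_mem _ (Or.inr rfl)) hne
          rcases this with h | h
          · exact h
          · -- y ≤ c, but some c' ∈ C with c' ≤ y, antichain forces c' = c
            obtain ⟨c', hc'C, hc'y⟩ := hy
            rcases eq_or_ne c' c with rfl | hne'
            · exact hc'y
            · exact absurd (hc'y.trans h) (hanti hc'C hcC hne')
      refine le_trans (Finset.inf_le (f := id) (b := c) ?_)
        (Finset.le_sup (f := id) (b := c) ?_)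
      · exact Finset.mem_filter.mpr ⟨hcC, hcx⟩
      · exact Finset.mem_filter.mpr ⟨hcC, hcy⟩
    · rw [if_neg hy]
      exact Finset.inf_mono (Finset.monotone_filter_right _ (fun c _ hc => le_trans hxy hc))
end

section
/- Let L be a finite lattice and S ⊆ L \ {⊥,⊤} a nonempty set with ⋀S ≠ ⊥ that is not a chain. Write S = {a_1,…,a_t} in a linear extension order (i < j implies a_i ≱ a_j). Let k(S) be the largest index k such that a_1 < a_2 < ⋯ < a_k and a_k < a_i for all i > k (k(S) = 0 if S has no minimum), and set a(S) = a_{k(S)+1} ∧ ⋯ ∧ a_t. Then a(S) is well-defined (k(S) ≤ t−2), a(S) ≠ ⊥, and S ∪ {a(S)} also satisfies ⋀(S ∪ {a(S)}) ≠ ⊥. -/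
open scoped Classical

/-- `IsPrefixLen a k` says that in the enumeration `a` (0-indexed), the first `k` elements
form an increasing chain `a 0 < a 1 < ⋯ < a (k-1)` and the last of them, `a (k-1)`, is
below all later elements. (For `k = 0` both conditions are vacuous.) -/
def IsPrefixLen {L : Type*} [Lattice L] {t : ℕ} (a : Fin t → L) (k : ℕ) : Prop :=
  (∀ i j : Fin t, i < j → (j : ℕ) < k → a i < a j) ∧
    (∀ j i : Fin t, (j : ℕ) + 1 = k → k ≤ (i : ℕ) → a j < a i)

/-- Let `S = {a 0, …, a (t-1)} ⊆ L \ {⊥,⊤}` be listed in a linear extension order, with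
`⋀ S ≠ ⊥` and `S` not a chain, and let `k = k(S)` be the largest admissible prefix length.
Then `k ≤ t - 2` (so `a(S)`, the meet of `a k, …, a (t-1)`, is well-defined), `a(S) ≠ ⊥`,
and the meet of `S ∪ {a(S)}` is also different from `⊥`. -/
theorem kS_aS_welldefined {L : Type*} [Lattice L] [BoundedOrder L] [Fintype L]
    (t : ℕ) (a : Fin t → L)
    (hinj : Function.Injective a)
    (hlin : ∀ i j : Fin t, i < j → ¬ a j ≤ a i)
    (hproper : ∀ i, a i ≠ ⊥ ∧ a i ≠ ⊤)
    (hinf : Finset.univ.inf a ≠ ⊥)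
    (hnotchain : ¬ IsChain (· ≤ ·) (Set.range a))
    (k : ℕ) (hk : k ≤ t) (hpre : IsPrefixLen a k)
    (hmax : ∀ k', k < k' → k' ≤ t → ¬ IsPrefixLen a k') :
    k ≤ t - 2 ∧
      ((Finset.univ.filter (fun i : Fin t => k ≤ (i : ℕ))).inf a ≠ ⊥) ∧
      (Finset.univ.inf a ⊓
        (Finset.univ.filter (fun i : Fin t => k ≤ (i : ℕ))).inf a ≠ ⊥) := by
  have hle : Finset.univ.inf a ≤
      (Finset.univ.filter (fun i : Fin t => k ≤ (i : ℕ))).inf a :=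
    Finset.inf_mono (Finset.filter_subset _ _)
  have h2 : (Finset.univ.filter (fun i : Fin t => k ≤ (i : ℕ))).inf a ≠ ⊥ := by
    intro h
    exact hinf (le_bot_iff.mp (h ▸ hle))
  refine ⟨?_, h2, ?_⟩
  · by_contra hlt
    push_neg at hlt
    apply hnotchain
    have hmono : ∀ i j : Fin t, i < j → a i < a j := by
      intro i j hij
      have ht2 : 2 ≤ t := by omega
      have hjn : (j : ℕ) < t := j.isLt
      have hk' : k = t - 1 ∨ k = t := by omega
      rcases hk' with hk' | hk'
      · by_cases hjlt : (j : ℕ) < t - 1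
        · exact hpre.1 i j hij (by omega)
        · have hjeq : (j : ℕ) = t - 1 := by omega
          by_cases hi1 : (i : ℕ) + 1 = t - 1
          · exact hpre.2 i j (by omega) (by omega)
          · have hijn : (i : ℕ) < (j : ℕ) := hij
            have him : (i : ℕ) < t - 2 := by omega
            set m : Fin t := ⟨t - 2, by omega⟩ with hm
            have h1 : a i < a m := hpre.1 i m (by simp [Fin.lt_def, hm]; omega)
              (by simp [hm]; omega)
            have h2' : a m < a j := hpre.2 m j (by simp [hm]; omega) (by omega)
            exact h1.trans h2'
      · exact hpre.1 i j hij (by omega)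
    rintro x ⟨i, rfl⟩ y ⟨j, rfl⟩ hne
    rcases lt_trichotomy i j with h | h | h
    · exact Or.inl (hmono i j h).le
    · exact absurd (congrArg a h) hne
    · exact Or.inr (hmono j i h).le
  · rw [inf_eq_left.mpr hle]
    exact hinf
end

section
/- With notation as in the matching of the complex of bounded-below sets: for any non-chain simplex S of J(L) with a(S) ∉ S, setting μ(S) = S ∪ {a(S)}, one has a(μ(S)) = a(S). Consequently the map μ, defined on Σ = {non-chain simplices S with a(S) ∉ S}, is an injective partial matching whose matched pairs exhaust exactly the non-chain simplices of J(L), leaving the chains as critical elements. -/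
open scoped Classical

/-- `core S` is what remains of the finite set `S` after repeatedly removing a least
element as long as one exists. For a non-chain `S` listed in a linear extension order
`a 1, …, a t`, this is exactly `{a (k(S)+1), …, a t}` where `k(S)` is as in the paper. -/
noncomputable def core {L : Type*} [Lattice L] (S : Finset L) : Finset L :=
  if h : ∃ m ∈ S, ∀ y ∈ S, m ≤ y then core (S.erase h.choose) else S
termination_by S.card
decreasing_by exact Finset.card_erase_lt_of_mem h.choose_spec.1

/-- `aFun S = a(S)` is the meet of the elements of `S` remaining after removal of the
maximal initial chain of minima, i.e. `a(S) = a (k(S)+1) ∧ ⋯ ∧ a t`. -/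
noncomputable def aFun {L : Type*} [Lattice L] [OrderTop L] (S : Finset L) : L :=
  (core S).inf id

/-- The matching map `μ(S) = S ∪ {a(S)}`. -/
noncomputable def muFun {L : Type*} [Lattice L] [OrderTop L] (S : Finset L) : Finset L :=
  insert (aFun S) S

/-- `Σ`: the non-chain simplices `S` of the complex `J(L)` of bounded-below sets with
`a(S) ∉ S`. -/
def SigmaSet (L : Type*) [Lattice L] [BoundedOrder L] : Set (Finset L) :=
  {S | S.Nonempty ∧ (∀ x ∈ S, x ≠ ⊥ ∧ x ≠ ⊤) ∧ S.inf id ≠ ⊥ ∧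
    ¬ IsChain (· ≤ ·) (↑S : Set L) ∧ aFun S ∉ S}

section Helpers

variable {L : Type*} [Lattice L]

lemma core_of_least {S : Finset L} {m : L} (hm : m ∈ S) (hle : ∀ y ∈ S, m ≤ y) :
    core S = core (S.erase m) := by
  have h : ∃ m ∈ S, ∀ y ∈ S, m ≤ y := ⟨m, hm, hle⟩
  rw [core, dif_pos h]
  have : h.choose = m := le_antisymm (h.choose_spec.2 m hm) (hle _ h.choose_spec.1)
  rw [this]

lemma core_of_no_least {S : Finset L} (h : ¬ ∃ m ∈ S, ∀ y ∈ S, m ≤ y) :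
    core S = S := by rw [core, dif_neg h]

lemma core_subset (S : Finset L) : core S ⊆ S := by
  rw [core]
  split
  · next h => exact (core_subset _).trans (Finset.erase_subset _ _)
  · exact subset_rfl
termination_by S.card
decreasing_by exact Finset.card_erase_lt_of_mem (Exists.choose_spec ‹∃ m ∈ _, ∀ y ∈ _, m ≤ y›).1

lemma core_no_least (S : Finset L) : ¬ ∃ m ∈ core S, ∀ y ∈ core S, m ≤ y := by
  rw [core]
  split
  · next h => exact core_no_least _
  · next h => exact h
termination_by S.card
decreasing_by exact Finset.card_erase_lt_of_mem (Exists.choose_spec ‹∃ m ∈ _, ∀ y ∈ _, m ≤ y›).1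

lemma not_isChain_erase {S : Finset L} {m : L} (hle : ∀ y ∈ S, m ≤ y)
    (hS : ¬ IsChain (· ≤ ·) (↑S : Set L)) :
    ¬ IsChain (· ≤ ·) (↑(S.erase m) : Set L) := by
  intro hc
  apply hS
  intro x hx y hy hxy
  by_cases hxm : x = m
  · exact Or.inl (hxm ▸ hle y hy)
  by_cases hym : y = m
  · exact Or.inr (hym ▸ hle x hx)
  · exact hc (Finset.mem_coe.2 (Finset.mem_erase.2 ⟨hxm, hx⟩))
      (Finset.mem_coe.2 (Finset.mem_erase.2 ⟨hym, hy⟩)) hxy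

lemma core_not_isChain (S : Finset L) (hS : ¬ IsChain (· ≤ ·) (↑S : Set L)) :
    ¬ IsChain (· ≤ ·) (↑(core S) : Set L) := by
  rw [core]
  split
  · next h => exact core_not_isChain _ (not_isChain_erase h.choose_spec.2 hS)
  · exact hS
termination_by S.card
decreasing_by exact Finset.card_erase_lt_of_mem (Exists.choose_spec ‹∃ m ∈ _, ∀ y ∈ _, m ≤ y›).1

lemma nonempty_of_not_isChain {S : Finset L} (hS : ¬ IsChain (· ≤ ·) (↑S : Set L)) :
    S.Nonempty := by
  rcases S.eq_empty_or_nonempty with rfl | h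
  · exact absurd (by simp [IsChain]) hS
  · exact h

lemma core_nonempty {S : Finset L} (hS : ¬ IsChain (· ≤ ·) (↑S : Set L)) :
    (core S).Nonempty := nonempty_of_not_isChain (core_not_isChain S hS)

lemma inf_core_notMem (S : Finset L) [OrderTop L] : (core S).inf id ∉ core S := by
  intro hmem
  exact core_no_least S ⟨_, hmem, fun y hy => Finset.inf_le hy⟩

lemma core_insert (S : Finset L) [OrderTop L] {a : L}
    (hS : ¬ IsChain (· ≤ ·) (↑S : Set L)) (ha : a ∉ S)
    (haS : a = (core S).inf id) : core (insert a S) = core S := by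
  by_cases h : ∃ m ∈ S, ∀ y ∈ S, m ≤ y
  · obtain ⟨m, hm, hle⟩ := h
    have hma : m ≤ a := haS ▸ Finset.le_inf (fun b hb => hle b (core_subset S hb))
    have hmne : m ≠ a := fun e => ha (e ▸ hm)
    have h1 : core (insert a S) = core ((insert a S).erase m) :=
      core_of_least (Finset.mem_insert_of_mem hm) (by
        rintro y hy
        rcases Finset.mem_insert.1 hy with rfl | hy
        · exact hma
        · exact hle y hy)
    have h2 : (insert a S).erase m = insert a (S.erase m) :=
      Finset.erase_insert_of_ne (Ne.symm hmne)
    have h3 : core S = core (S.erase m) := core_of_least hm hle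
    rw [h1, h2, h3]
    exact core_insert (S.erase m) (not_isChain_erase hle hS)
      (fun hmem => ha (Finset.mem_of_mem_erase hmem)) (h3 ▸ haS)
  · have hcS : core S = S := core_of_no_least h
    have hale : ∀ y ∈ insert a S, a ≤ y := by
      rintro y hy
      rcases Finset.mem_insert.1 hy with rfl | hy
      · exact le_rfl
      · rw [haS, hcS]; exact Finset.inf_le hy
    rw [core_of_least (Finset.mem_insert_self a S) hale, Finset.erase_insert ha, hcS]
termination_by S.card
decreasing_by exact Finset.card_erase_lt_of_mem hm

lemma core_erase (S : Finset L) [OrderTop L] {a : L}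
    (hS : ¬ IsChain (· ≤ ·) (↑S : Set L)) (ha : a ∈ S)
    (haS : a = (core S).inf id) : core (S.erase a) = core S := by
  by_cases h : ∃ m ∈ S, ∀ y ∈ S, m ≤ y
  · obtain ⟨m, hm, hle⟩ := h
    by_cases hma : m = a
    · subst hma
      exact (core_of_least hm hle).symm
    · have h3 : core S = core (S.erase m) := core_of_least hm hle
      have h1 : core (S.erase a) = core ((S.erase a).erase m) :=
        core_of_least (Finset.mem_erase.2 ⟨hma, hm⟩)
          (fun y hy => hle y (Finset.mem_of_mem_erase hy))
      have h2 : (S.erase a).erase m = (S.erase m).erase a := Finset.erase_right_comm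
      rw [h1, h2, h3]
      exact core_erase (S.erase m) (not_isChain_erase hle hS)
        (Finset.mem_erase.2 ⟨fun e => hma e.symm, ha⟩) (h3 ▸ haS)
  · exfalso
    have hcS : core S = S := core_of_no_least h
    refine h ⟨a, ha, fun y hy => ?_⟩
    rw [haS, hcS]; exact Finset.inf_le hy
termination_by S.card
decreasing_by exact Finset.card_erase_lt_of_mem hm

end Helpers

/-- For any `S ∈ Σ` one has `a(μ(S)) = a(S)`; consequently `μ` is an injective partial
matching on `Σ` whose matched pairs exhaust exactly the non-chain simplices of `J(L)`,
leaving the chains as the critical elements. -/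
theorem muFun_matching {L : Type*} [Lattice L] [BoundedOrder L] [Fintype L] :
    (∀ S ∈ SigmaSet L, aFun (muFun S) = aFun S) ∧
      Set.InjOn muFun (SigmaSet L) ∧
      (∀ T : Finset L, T.Nonempty → (∀ x ∈ T, x ≠ ⊥ ∧ x ≠ ⊤) → T.inf id ≠ ⊥ →
        ¬ IsChain (· ≤ ·) (↑T : Set L) →
        T ∈ SigmaSet L ∨ ∃ S ∈ SigmaSet L, T = muFun S) ∧
      (∀ S ∈ SigmaSet L, muFun S ∉ SigmaSet L ∧
        (muFun S).Nonempty ∧ (∀ x ∈ muFun S, x ≠ ⊥ ∧ x ≠ ⊤) ∧ (muFun S).inf id ≠ ⊥ ∧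
        ¬ IsChain (· ≤ ·) (↑(muFun S) : Set L)) := by
  have key : ∀ S : Finset L, ¬ IsChain (· ≤ ·) (↑S : Set L) → aFun S ∉ S →
      aFun (muFun S) = aFun S := by
    intro S hS ha
    show (core (insert (aFun S) S)).inf id = aFun S
    rw [core_insert S hS ha rfl]
    rfl
  have infle : ∀ S : Finset L, S.inf id ≤ aFun S := by
    intro S
    exact Finset.inf_mono (core_subset S)
  refine ⟨fun S hS => key S hS.2.2.2.1 hS.2.2.2.2, ?_, ?_, ?_⟩
  · -- injectivity
    intro S1 h1 S2 h2 he
    have ha : aFun S1 = aFun S2 := by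
      rw [← key S1 h1.2.2.2.1 h1.2.2.2.2, he, key S2 h2.2.2.2.1 h2.2.2.2.2]
    have e1 : S1 = (muFun S1).erase (aFun S1) := by
      show S1 = (insert (aFun S1) S1).erase (aFun S1)
      rw [Finset.erase_insert h1.2.2.2.2]
    have e2 : S2 = (muFun S2).erase (aFun S2) := by
      show S2 = (insert (aFun S2) S2).erase (aFun S2)
      rw [Finset.erase_insert h2.2.2.2.2]
    rw [e1, e2, he, ha]
  · -- exhaustion
    intro T hTne hTe hTi hTc
    by_cases haT : aFun T ∈ T
    · right
      have hcore : core (T.erase (aFun T)) = core T := core_erase T hTc haT rfl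
      have haF : aFun (T.erase (aFun T)) = aFun T := by
        show (core (T.erase (aFun T))).inf id = aFun T
        rw [hcore]; rfl
      have hsub : core T ⊆ T.erase (aFun T) := by
        intro x hx
        refine Finset.mem_erase.2 ⟨fun e => ?_, core_subset T hx⟩
        rw [e] at hx
        exact inf_core_notMem T hx
      have hnc : ¬ IsChain (· ≤ ·) (↑(T.erase (aFun T)) : Set L) := by
        intro hch
        exact core_not_isChain T hTc (hch.mono (Finset.coe_subset.2 hsub))
      refine ⟨T.erase (aFun T), ⟨nonempty_of_not_isChain hnc,
        fun x hx => hTe x (Finset.mem_of_mem_erase hx), ?_, hnc, ?_⟩, ?_⟩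
      · intro hb
        exact hTi (le_bot_iff.1 (hb ▸ Finset.inf_mono (Finset.erase_subset (aFun T) T)))
      · rw [haF]; exact Finset.notMem_erase _ _
      · show T = insert (aFun (T.erase (aFun T))) (T.erase (aFun T))
        rw [haF, Finset.insert_erase haT]
    · left
      exact ⟨hTne, hTe, hTi, hTc, haT⟩
  · -- properties of μ(S)
    intro S hS
    obtain ⟨hne, hel, hinf, hch, hna⟩ := hS
    have hamem : aFun (muFun S) ∈ muFun S := by
      rw [key S hch hna]
      exact Finset.mem_insert_self _ _
    have haS_bot : aFun S ≠ ⊥ := by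
      intro hb
      exact hinf (le_bot_iff.1 (hb ▸ infle S))
    have haS_top : aFun S ≠ ⊤ := by
      obtain ⟨c, hc⟩ := core_nonempty hch
      have h1 : aFun S ≤ c := Finset.inf_le hc
      intro ht
      exact (hel c (core_subset S hc)).2 (top_le_iff.1 (ht ▸ h1))
    refine ⟨fun hmem => hmem.2.2.2.2 hamem, ⟨aFun S, Finset.mem_insert_self _ _⟩,
      ?_, ?_, ?_⟩
    · intro x hx
      rcases Finset.mem_insert.1 hx with rfl | hx
      · exact ⟨haS_bot, haS_top⟩
      · exact hel x hx
    · intro hb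
      have : S.inf id ≤ (muFun S).inf id :=
        Finset.le_inf (by
          intro b hb'
          rcases Finset.mem_insert.1 hb' with rfl | hb'
          · exact infle S
          · exact Finset.inf_le hb')
      exact hinf (le_bot_iff.1 (hb ▸ this))
    · intro hchain
      exact hch (hchain.mono (Finset.coe_subset.2 (Finset.subset_insert _ _)))
end

section
/- Let X be a finite simplicial complex, σ a simplex of X, v a new vertex, and X' the complex obtained from X by adding v with link equal to the closed star st_X(σ). Let A be the set of simplices of X' containing σ but not v, and B the set of simplices containing both σ and v. Then τ ↦ τ ∪ {v} is a bijection from A to B, and deleting A ∪ B from X' yields the stellar subdivision sd(X,σ) of X at σ. -/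
open Finset in
/-- Let `X` be a finite abstract simplicial complex (a downward closed family of finite
sets), `σ ∈ X` a nonempty simplex, and `v` a fresh vertex. Let `X'` be obtained from `X`
by adding the new vertex `v` whose link is the closed star of `σ` (whose simplices are
the `τ` with `τ ∪ σ ∈ X`), let `A` be the set of simplices of `X'` containing `σ` but not
`v`, and `B` the set of those containing both `σ` and `v`. Then `τ ↦ τ ∪ {v}` is a
bijection from `A` onto `B`, and deleting `A ∪ B` from `X'` yields exactly the stellar
subdivision `sd(X, σ)`: the simplices of `X` not containing `σ`, together with the sets
`{v} ∪ τ ∪ ρ` with `τ ∪ σ ∈ X`, `ρ ⊊ σ`, and `σ ⊄ τ ∪ ρ`. -/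
theorem stellar_subdivision_via_cone_and_collapse {V : Type*} [DecidableEq V]
    (X : Set (Finset V))
    (hdown : ∀ s ∈ X, ∀ t ⊆ s, t ∈ X)
    (σ : Finset V) (hσX : σ ∈ X) (hσne : σ.Nonempty)
    (v : V) (hv : ∀ s ∈ X, v ∉ s)
    (X' : Set (Finset V))
    (hX' : X' = {s | s ∈ X ∨ ∃ τ : Finset V, τ ∪ σ ∈ X ∧ s = insert v τ})
    (A : Set (Finset V)) (hA : A = {s ∈ X' | σ ⊆ s ∧ v ∉ s})
    (B : Set (Finset V)) (hB : B = {s ∈ X' | σ ⊆ s ∧ v ∈ s}) :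
    Set.BijOn (fun s => insert v s) A B ∧
      X' \ (A ∪ B) =
        {s | (v ∉ s ∧ s ∈ X ∧ ¬ σ ⊆ s) ∨
          (v ∈ s ∧ ∃ τ ρ : Finset V, ¬ σ ⊆ τ ∪ ρ ∧ τ ∪ σ ∈ X ∧ ρ ⊂ σ ∧
            s = insert v (τ ∪ ρ))} := by
  subst hX' hA hB
  have hvσ : v ∉ σ := hv σ hσX
  constructor
  · refine ⟨?_, ?_, ?_⟩
    · rintro s ⟨hs, hσs, hvs⟩
      have hsX : s ∈ X := by
        rcases hs with h | ⟨τ, hτ, rfl⟩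
        · exact h
        · exact absurd (mem_insert_self v τ) hvs
      refine ⟨Or.inr ⟨s, ?_, rfl⟩, hσs.trans (subset_insert v s), mem_insert_self v s⟩
      rwa [Finset.union_eq_left.2 hσs]
    · rintro s ⟨hs, hσs, hvs⟩ t ⟨ht, hσt, hvt⟩ h
      have := congrArg (fun u => Finset.erase u v) h
      simpa [Finset.erase_insert hvs, Finset.erase_insert hvt] using this
    · rintro b ⟨hb, hσb, hvb⟩
      rcases hb with h | ⟨τ, hτ, rfl⟩
      · exact absurd hvb (hv b h)
      · have hvτ : v ∉ τ := fun h => hv _ hτ (Finset.mem_union_left _ h)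
        have hστ : σ ⊆ τ := by
          intro x hx
          rcases Finset.mem_insert.1 (hσb hx) with rfl | hxτ
          · exact absurd hx hvσ
          · exact hxτ
        exact ⟨τ, ⟨Or.inl (hdown _ hτ τ Finset.subset_union_left), hστ, hvτ⟩, rfl⟩
  · ext s
    simp only [Set.mem_diff, Set.mem_union, Set.mem_setOf_eq, not_or]
    constructor
    · rintro ⟨hs, hnA, hnB⟩
      rcases hs with h | ⟨τ, hτ, rfl⟩
      · have hvs : v ∉ s := hv s h
        have hns : ¬ σ ⊆ s := fun hσs => hnA ⟨Or.inl h, hσs, hvs⟩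
        exact Or.inl ⟨hvs, h, hns⟩
      · have hvτ : v ∉ τ := fun h => hv _ hτ (Finset.mem_union_left _ h)
        have hns : ¬ σ ⊆ insert v τ := fun hσs =>
          hnB ⟨Or.inr ⟨τ, hτ, rfl⟩, hσs, mem_insert_self v τ⟩
        have hnστ : ¬ σ ⊆ τ := fun h => hns (h.trans (subset_insert v τ))
        refine Or.inr ⟨mem_insert_self v τ, τ, σ ∩ τ, ?_, hτ, ?_, ?_⟩
        · rw [Finset.union_eq_left.2 Finset.inter_subset_right]; exact hnστ
        · exact Finset.ssubset_iff_subset_ne.2 ⟨Finset.inter_subset_left,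
            fun h => hnστ (h ▸ Finset.inter_subset_right)⟩
        · rw [Finset.union_eq_left.2 Finset.inter_subset_right]
    · rintro (⟨hvs, hsX, hns⟩ | ⟨hvs, τ, ρ, hns, hτ, hρ, rfl⟩)
      · refine ⟨Or.inl hsX, ?_, ?_⟩
        · rintro ⟨-, hσs, -⟩; exact hns hσs
        · rintro ⟨-, -, hvs'⟩; exact hvs hvs'
      · have hmem : (τ ∪ ρ) ∪ σ ∈ X := by
          rw [Finset.union_assoc, Finset.union_eq_right.2 hρ.subset]
          exact hτ
        have hns' : ¬ σ ⊆ insert v (τ ∪ ρ) := by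
          intro hσs
          exact hns (fun x hx => by
            rcases Finset.mem_insert.1 (hσs hx) with rfl | h
            · exact absurd hx hvσ
            · exact h)
        refine ⟨Or.inr ⟨τ ∪ ρ, hmem, rfl⟩, ?_, ?_⟩
        · rintro ⟨-, hσs, -⟩; exact hns' hσs
        · rintro ⟨-, hσs, -⟩; exact hns' hσs
end
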